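/- Suppose z ∈ W^{IJ}, α ∈ Π_I with z⁻¹(α) ∈ Π_J, and s = s_α. Then for every λ ∈ X the following identity holds in H: C_{w_I} θ_{s(λ)} T_z C_{w_J} = C_{w_I} ( v² θ_λ − θ_{λ−α} + v² θ_{s(λ)+α} ) T_z C_{w_J}. -/

import Mathlib

noncomputable section
open scoped Classical

/-- The coefficient ring `A = ℤ[v, v⁻¹]`. -/
abbrev A : Type := LaurentPolynomial ℤ

/-- The variable `v ∈ A`. -/
abbrev v : A := LaurentPolynomial.T 1

/-- A context consisting of a finitely generated free abelian group `X` containing a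
reduced crystallographic root system with base `Pi`, together with its Weyl group `W`
acting faithfully on `X`, simple reflections `sref α` for `α ∈ Pi`, the coroot pairing
`pair lam α = ⟨lam, α̌⟩`, the set `S` of simple reflections, and the length function. -/
structure WeylCtx where
  X : Type
  [addX : AddCommGroup X]
  [freeX : Module.Free ℤ X]
  [finX : Module.Finite ℤ X]
  W : Type
  [grpW : Group W]
  [finW : Fintype W]
  act : W →* Multiplicative (AddAut X)
  act_inj : Function.Injective act
  Pi : Set X
  pair : X → X → ℤ
  sref : X → W
  S : Set W
  S_eq : S = sref '' Pi
  S_gen : Subgroup.closure S = ⊤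
  sref_apply : ∀ α ∈ Pi, ∀ lam : X, Multiplicative.toAdd (act (sref α)) lam = lam - pair lam α • α
  len : W → ℕ
  len_spec : ∀ w, len w =
    sInf {n | ∃ l : List W, (∀ s ∈ l, s ∈ S) ∧ l.prod = w ∧ l.length = n}

attribute [instance] WeylCtx.addX WeylCtx.freeX WeylCtx.finX WeylCtx.grpW WeylCtx.finW

namespace WeylCtx

variable (C : WeylCtx)

/-- The action of `W` on `Multiplicative X`. -/
def phi : C.W →* MulAut (Multiplicative C.X) where
  toFun w := AddEquiv.toMultiplicative (Multiplicative.toAdd (C.act w))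
  map_one' := by
    ext x
    simp only [map_one]
    rfl
  map_mul' w w' := by
    ext x
    simp only [map_mul]
    rfl

/-- The extended affine Weyl group `W_ext = X ⋊ W`. -/
abbrev Wext := Multiplicative C.X ⋊[C.phi] C.W

/-- The translation `t_λ ∈ W_ext` for `λ ∈ X`. -/
def t (lam : C.X) : C.Wext := SemidirectProduct.inl (Multiplicative.ofAdd lam)

/-- The canonical embedding of `W` into `W_ext`. -/
def of (w : C.W) : C.Wext := SemidirectProduct.inr w

/-- The standard parabolic subgroup `W_I` generated by `I ⊆ S`. -/
def WI (I : Set C.W) : Subgroup C.W := Subgroup.closure I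

/-- `Π_I = {α ∈ Π : s_α ∈ I}`. -/
def PiI (I : Set C.W) : Set C.X := {α | α ∈ C.Pi ∧ C.sref α ∈ I}

/-- `X⁺_I = {λ ∈ X : ⟨λ, α̌⟩ ≥ 0 for all α ∈ Π_I}`. -/
def XplusI (I : Set C.W) : Set C.X := {lam | ∀ α ∈ C.PiI I, 0 ≤ C.pair lam α}

/-- `Π_{I ∩ ᶻJ} = Π_I ∩ z(Π_J)` for `z ∈ W`. -/
def PiZ (I J : Set C.W) (z : C.W) : Set C.X := C.PiI I ∩ (⇑(Multiplicative.toAdd (C.act z)) '' C.PiI J)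

/-- `X⁺_z = X⁺_{I ∩ ᶻJ}`. -/
def XplusZ (I J : Set C.W) (z : C.W) : Set C.X := {lam | ∀ α ∈ C.PiZ I J z, 0 ≤ C.pair lam α}

/-- The `(W_I, W_J)`-double coset of `w` in `W`. -/
def dcos (I J : Set C.W) (w : C.W) : Set C.W :=
  {x | ∃ a ∈ C.WI I, ∃ b ∈ C.WI J, x = a * w * b}

/-- `W^{IJ}`: the set of minimal length `(W_I, W_J)`-double coset representatives in `W`. -/
def WIJ (I J : Set C.W) : Set C.W := {z | ∀ x ∈ C.dcos I J z, C.len z ≤ C.len x}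

/-- The `(W_I, W_J)`-double coset of `x` in `W_ext`. -/
def dcosE (I J : Set C.W) (x : C.Wext) : Set C.Wext :=
  {y | ∃ a ∈ C.WI I, ∃ b ∈ C.WI J, y = C.of a * x * C.of b}

/-- The set of reflections of `(W, S)`. -/
def refl : Set C.W := {t | ∃ s ∈ C.S, ∃ w : C.W, t = w * s * w⁻¹}

/-- The Bruhat order on `W`. -/
def ble : C.W → C.W → Prop :=
  Relation.ReflTransGen (fun x y => (∃ t ∈ C.refl, y = x * t) ∧ C.len x < C.len y)

/-- `w` is the longest element of `W_I`. -/
def IsLongest (I : Set C.W) (w : C.W) : Prop :=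
  w ∈ C.WI I ∧ ∀ y ∈ C.WI I, C.len y ≤ C.len w

end WeylCtx

/-- Extension of the length function and Bruhat order from `W_af` to `W_ext`. -/
structure ExtCtx (C : WeylCtx) where
  lenE : C.Wext → ℕ
  lenE_of : ∀ w : C.W, lenE (C.of w) = C.len w
  ltE : C.Wext → C.Wext → Prop
  ltE_trans : ∀ {x y z : C.Wext}, ltE x y → ltE y z → ltE x z
  ltE_len : ∀ {x y : C.Wext}, ltE x y → lenE x < lenE y

/-- `m` is a minimal length element of the `(W_I, W_J)`-double coset of `x` in `W_ext`. -/
def IsMinRep (C : WeylCtx) (E : ExtCtx C) (I J : Set C.W) (x m : C.Wext) : Prop :=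
  m ∈ C.dcosE I J x ∧ ∀ y ∈ C.dcosE I J x, E.lenE m ≤ E.lenE y
/-- The extended affine Hecke algebra `H` of the context, together with its standard
basis `{T_x : x ∈ W_ext}`, Bernstein generators `θ_λ`, the bar involution, and the
Kazhdan–Lusztig basis elements `KL x = C'_x`. -/
structure HeckeCtx (C : WeylCtx) (E : ExtCtx C) where
  H : Type
  [ringH : Ring H]
  [algH : Algebra A H]
  T : C.Wext → H
  theta : C.X → H
  bT : Module.Basis C.Wext A H
  bT_eq : ∀ x, bT x = T x
  T_one : T 1 = 1
  T_mul : ∀ x y, E.lenE (x * y) = E.lenE x + E.lenE y → T x * T y = T (x * y)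
  T_sq : ∀ s ∈ C.S,
    T (C.of s) * T (C.of s) = (v ^ 2 : A) • (1 : H) + (v ^ 2 - 1 : A) • T (C.of s)
  theta_mul : ∀ lam mu, theta lam * theta mu = theta (lam + mu)
  theta_zero : theta 0 = 1
  bernstein : ∀ α ∈ C.Pi, ∀ lam : C.X,
    (theta lam * T (C.of (C.sref α)) - T (C.of (C.sref α)) * theta (Multiplicative.toAdd (C.act (C.sref α)) lam)) *
        (1 - theta (-α))
      = (v ^ 2 - 1 : A) • (theta lam - theta (Multiplicative.toAdd (C.act (C.sref α)) lam))
  bernstein_mem : ∀ α ∈ C.Pi, ∀ lam : C.X,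
    theta lam * T (C.of (C.sref α)) - T (C.of (C.sref α)) * theta (Multiplicative.toAdd (C.act (C.sref α)) lam)
      ∈ Submodule.span A (Set.range theta)
  bB : Module.Basis (C.X × C.W) A H
  bB_eq : ∀ p, bB p = theta p.1 * T (C.of p.2)
  Tu : C.Wext → Hˣ
  Tu_eq : ∀ x, (Tu x : H) = T x
  bar : H ≃+* H
  bar_T : ∀ x : C.Wext, bar (T x) = (((Tu x⁻¹)⁻¹ : Hˣ) : H)
  bar_smul : ∀ (n : ℤ) (h : H),
    bar ((LaurentPolynomial.T n : A) • h) = (LaurentPolynomial.T (-n) : A) • bar h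
  KL : C.Wext → H
  Pkl : C.Wext → C.Wext → Polynomial ℤ
  KL_bar : ∀ x, bar (KL x) = KL x
  KL_coeff_self : ∀ x, bT.repr (KL x) x = LaurentPolynomial.T (-(E.lenE x : ℤ))
  KL_coeff_lt : ∀ x y, E.ltE y x →
    bT.repr (KL x) y = LaurentPolynomial.T (-(E.lenE x : ℤ)) * (Pkl y x).toLaurent
  KL_support : ∀ x y, bT.repr (KL x) y ≠ 0 → y = x ∨ E.ltE y x
  Pkl_deg : ∀ x y, E.ltE y x →
    (Pkl y x).degree ≤ ((E.lenE x - E.lenE y - 1 : ℕ) : WithBot ℕ)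

attribute [instance] HeckeCtx.ringH HeckeCtx.algH

namespace HeckeCtx

variable {C : WeylCtx} {E : ExtCtx C} (HC : HeckeCtx C E)

/-- The Kazhdan–Lusztig element
`C_{w_I} = (-v)^{ℓ(w_I)} ∑_{y ∈ W_I} (-1)^{ℓ(y)} v^{-2ℓ(y)} T_y`. -/
def Cw (I : Set C.W) (wI : C.W) : HC.H :=
  ((-v) ^ C.len wI : A) •
    ∑ y ∈ Finset.univ.filter (fun y => y ∈ C.WI I),
      ((-1 : A) ^ C.len y * LaurentPolynomial.T (-(2 * (C.len y : ℤ)))) • HC.T (C.of y)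

/-- The map `χ^{IJ} : H → H^{IJ}`, `h ↦ C_{w_I} h C_{w_J}`. -/
def chi (I J : Set C.W) (wI wJ : C.W) (h : HC.H) : HC.H :=
  HC.Cw I wI * h * HC.Cw J wJ

/-- `H^{IJ} = C_{w_I} H C_{w_J}` as an `A`-submodule of `H`. -/
def HIJ (I J : Set C.W) (wI wJ : C.W) : Submodule A HC.H :=
  LinearMap.range
    ((LinearMap.mulLeft A (HC.Cw I wI)).comp (LinearMap.mulRight A (HC.Cw J wJ)))

end HeckeCtx

/-- The index set of pairs `(λ, z)` with `z ∈ W^{IJ}` and `λ ∈ X⁺_z`. -/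
def Dtype (C : WeylCtx) (I J : Set C.W) : Type :=
  {p : C.X × C.W // p.2 ∈ C.WIJ I J ∧ p.1 ∈ C.XplusZ I J p.2}

/-! ### Auxiliary lemmas -/

section Aux

open LaurentPolynomial in
lemma aux_two_vsq_ne : (2 : A) * v ^ 2 ≠ 2 := by
  have h2 : (2 : A) = C 2 := (map_ofNat C 2).symm
  have h3 : (v ^ 2 : A) = T 2 := by
    rw [LaurentPolynomial.T_pow]; norm_num
  intro h
  rw [h2, h3, ← single_eq_C_mul_T, ← single_eq_C] at h
  have := (AddMonoidAlgebra.single_left_inj (by norm_num)).1 h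
  norm_num at this

variable (C : WeylCtx)

/-- If the action of `w` is `lam ↦ lam - f lam • α`, then `f` is additive. -/
lemma aux_f_additive {α : C.X} (hα : α ≠ 0) {w : C.W} {f : C.X → ℤ}
    (hw : ∀ lam, (Multiplicative.toAdd (C.act w)) lam = lam - f lam • α) (x y : C.X) :
    f (x + y) = f x + f y := by
  have h1 : x + y - f (x + y) • α = (x - f x • α) + (y - f y • α) := by
    rw [← hw, ← hw, ← hw, map_add]
  have h2 : f (x + y) • α = (f x + f y) • α := by
    rw [add_smul]
    have := congrArg (fun t => (x + y) - t) h1.symm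
    have h3 : x + y - (f x • α + f y • α) = x + y - f (x + y) • α → True := fun _ => trivial
    -- rearrange
    have h4 : (x + y) - ((x - f x • α) + (y - f y • α)) = f x • α + f y • α := by abel
    have h5 : (x + y) - (x + y - f (x + y) • α) = f (x + y) • α := by abel
    rw [← h5, h1, h4]
  exact smul_left_injective ℤ hα h2

/-- A "transvection" in `W` (fixing `α` and shifting along `α`) must be trivial,
since `W` is finite and `X` is torsion-free. -/
lemma aux_transvection_eq_one {α : C.X} (hα : α ≠ 0) {w : C.W} {f : C.X → ℤ}
    (hw : ∀ lam, (Multiplicative.toAdd (C.act w)) lam = lam - f lam • α) (hf0 : f α = 0) : w = 1 := by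
  have hadd := aux_f_additive C hα hw
  let fh : C.X →+ ℤ := AddMonoidHom.mk' f (hadd)
  have hfsmul : ∀ (k : ℤ) (x : C.X), f (k • x) = k * f x := fun k x => by
    simpa [fh] using map_zsmul fh k x
  have key : ∀ (k : ℕ) (lam : C.X), (Multiplicative.toAdd (C.act (w ^ k))) lam = lam - (k * f lam) • α := by
    intro k
    induction k with
    | zero => intro lam; simp
    | succ k ih =>
      intro lam
      have : w ^ (k + 1) = w * w ^ k := by rw [pow_succ']
      rw [this, map_mul]
      have : (Multiplicative.toAdd (C.act w * C.act (w ^ k))) lam = (Multiplicative.toAdd (C.act w)) ((Multiplicative.toAdd (C.act (w ^ k))) lam) := rfl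
      rw [this, ih, hw]
      have hf : f (lam - (↑k * f lam) • α) = f lam := by
        have : lam - (↑k * f lam) • α = lam + (-(↑k * f lam)) • α := by
          rw [neg_smul]; abel
        rw [this, hadd, hfsmul, hf0]
        ring
      rw [hf]
      push_cast
      have : ((k : ℤ) + 1) * f lam = (k : ℤ) * f lam + f lam := by ring
      rw [this, add_smul]
      abel
  have hN : 0 < orderOf w := by
    have : Finite C.W := Finite.of_fintype _
    exact orderOf_pos w
  have hzero : ∀ lam, f lam = 0 := by
    intro lam
    have h1 := key (orderOf w) lam
    rw [pow_orderOf_eq_one, map_one] at h1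
    have h1' : (Multiplicative.toAdd (1 : Multiplicative (AddAut C.X))) lam = lam := rfl
    rw [h1'] at h1
    have h2 : ((orderOf w : ℤ) * f lam) • α = 0 := by
      have := congrArg (fun t => lam - t) h1
      simp only [sub_sub_cancel, sub_self] at this
      exact this.symm
    rcases smul_eq_zero.mp h2 with h | h
    · have hNne : (orderOf w : ℤ) ≠ 0 := by exact_mod_cast hN.ne'
      rcases mul_eq_zero.mp h with h' | h'
      · exact absurd h' hNne
      · exact h'
    · exact absurd h hα
  apply C.act_inj
  ext lam
  simp [hw lam, hzero lam, map_one]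

variable {C} {E : ExtCtx C} (HC : HeckeCtx C E)
include HC

/-- A simple reflection is not the identity (because of the quadratic relation in `H`). -/
lemma aux_mem_S_ne_one {s : C.W} (hs : s ∈ C.S) : s ≠ 1 := by
  intro h
  subst h
  have h1 := HC.T_sq 1 hs
  have hof : C.of (1 : C.W) = 1 := map_one _
  rw [hof, HC.T_one, mul_one] at h1
  have h2 : (1 : HC.H) = (v ^ 2 + (v ^ 2 - 1) : A) • (1 : HC.H) := by
    rw [add_smul]; exact h1
  have h3 : HC.bT 1 = (v ^ 2 + (v ^ 2 - 1) : A) • HC.bT 1 := by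
    rw [HC.bT_eq, HC.T_one]; exact h2
  have h4 := congrArg (fun x => HC.bT.repr x 1) h3
  simp only [Module.Basis.repr_self, map_smul, Finsupp.smul_apply, Finsupp.single_eq_same,
    smul_eq_mul, mul_one] at h4
  apply aux_two_vsq_ne
  have : (2 : A) * v ^ 2 = (v ^ 2 + (v ^ 2 - 1)) + 1 := by ring
  rw [this, ← h4]; ring

omit HC in
lemma aux_sref_mem_S {γ : C.X} (hγ : γ ∈ C.Pi) : C.sref γ ∈ C.S := by
  rw [C.S_eq]; exact ⟨γ, hγ, rfl⟩

lemma aux_root_ne_zero {γ : C.X} (hγ : γ ∈ C.Pi) : γ ≠ 0 := by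
  intro h
  apply aux_mem_S_ne_one HC (aux_sref_mem_S hγ)
  apply C.act_inj
  ext lam
  rw [C.sref_apply γ hγ lam, h, map_one]
  simp

lemma aux_pair_additive {γ : C.X} (hγ : γ ∈ C.Pi) (x y : C.X) :
    C.pair (x + y) γ = C.pair x γ + C.pair y γ :=
  aux_f_additive C (aux_root_ne_zero HC hγ) (C.sref_apply γ hγ) x y

/-- The coroot pairing on `γ` as an additive hom. -/
lemma aux_pair_smul {γ : C.X} (hγ : γ ∈ C.Pi) (k : ℤ) (x : C.X) :
    C.pair (k • x) γ = k * C.pair x γ := by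
  let fh : C.X →+ ℤ := AddMonoidHom.mk' (fun x => C.pair x γ) (aux_pair_additive HC hγ)
  simpa [fh] using map_zsmul fh k x

lemma aux_pair_neg {γ : C.X} (hγ : γ ∈ C.Pi) (x : C.X) :
    C.pair (-x) γ = -C.pair x γ := by
  have := aux_pair_smul HC hγ (-1) x
  simpa using this

lemma aux_pair_sub {γ : C.X} (hγ : γ ∈ C.Pi) (x y : C.X) :
    C.pair (x - y) γ = C.pair x γ - C.pair y γ := by
  rw [sub_eq_add_neg, aux_pair_additive HC hγ, aux_pair_neg HC hγ]; ring

/-- Crystallographic condition `⟨γ, γ̌⟩ = 2`, forced by finiteness of `W`. -/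
lemma aux_pair_self_eq_two {γ : C.X} (hγ : γ ∈ C.Pi) : C.pair γ γ = 2 := by
  set s := C.sref γ with hs
  set p := C.pair γ γ with hp
  have hγ0 : γ ≠ 0 := aux_root_ne_zero HC hγ
  have hact : ∀ k : ℕ, (Multiplicative.toAdd (C.act (s ^ k))) γ = ((1 - p) ^ k) • γ := by
    intro k
    induction k with
    | zero => simp
    | succ k ih =>
      rw [pow_succ', map_mul]
      have h1 : (Multiplicative.toAdd (C.act s * C.act (s ^ k))) γ = (Multiplicative.toAdd (C.act s)) ((Multiplicative.toAdd (C.act (s ^ k))) γ) := rfl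
      rw [h1, ih, map_zsmul, C.sref_apply γ hγ γ, ← hp]
      have : γ - p • γ = (1 - p) • γ := by rw [sub_smul, one_smul]
      rw [this, smul_smul, pow_succ]
  have hN : 0 < orderOf s := by
    have : Finite C.W := Finite.of_fintype _
    exact orderOf_pos s
  have hunit : (1 - p) ^ orderOf s = 1 := by
    have h1 := hact (orderOf s)
    rw [pow_orderOf_eq_one, map_one] at h1
    have h1' : (Multiplicative.toAdd (1 : Multiplicative (AddAut C.X))) γ = γ := rfl
    rw [h1'] at h1
    have h2 : ((1 - p) ^ orderOf s) • γ = (1 : ℤ) • γ := by rw [one_smul]; exact h1.symm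
    exact smul_left_injective ℤ hγ0 h2
  have : IsUnit (1 - p) := IsUnit.of_pow_eq_one hunit hN.ne'
  rcases Int.isUnit_iff.mp this with h | h
  · -- 1 - p = 1, i.e. p = 0, so sref γ is a transvection, hence trivial: contradiction
    exfalso
    apply aux_mem_S_ne_one HC (aux_sref_mem_S hγ)
    apply aux_transvection_eq_one C hγ0 (C.sref_apply γ hγ)
    omega
  · omega

lemma aux_act_sref_self {γ : C.X} (hγ : γ ∈ C.Pi) : (Multiplicative.toAdd (C.act (C.sref γ))) γ = -γ := by
  rw [C.sref_apply γ hγ γ, aux_pair_self_eq_two HC hγ]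
  have : (2 : ℤ) • γ = γ + γ := two_smul ℤ γ
  rw [this]; abel

lemma aux_sref_sq {γ : C.X} (hγ : γ ∈ C.Pi) : C.sref γ * C.sref γ = 1 := by
  apply C.act_inj
  rw [map_mul, map_one]
  ext lam
  have h1 : (Multiplicative.toAdd (C.act (C.sref γ) * C.act (C.sref γ))) lam
      = (Multiplicative.toAdd (C.act (C.sref γ))) ((Multiplicative.toAdd (C.act (C.sref γ))) lam) := rfl
  rw [h1, C.sref_apply γ hγ lam, C.sref_apply γ hγ _, aux_pair_sub HC hγ,
    aux_pair_smul HC hγ, aux_pair_self_eq_two HC hγ]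
  have h2 : (Multiplicative.toAdd (1 : Multiplicative (AddAut C.X))) lam = lam := rfl
  rw [h2]
  have : C.pair lam γ - C.pair lam γ * 2 = -C.pair lam γ := by ring
  rw [this, neg_smul]
  abel

/-- The sign character of `W`, via determinants. -/
def auxEps (C : WeylCtx) (w : C.W) : ℤ :=
  LinearMap.det (((Multiplicative.toAdd (C.act w))).toAddMonoidHom.toIntLinearMap)

omit HC in
lemma aux_lin_mul (w w' : C.W) :
    (((Multiplicative.toAdd (C.act (w * w')))).toAddMonoidHom.toIntLinearMap)
      = (((Multiplicative.toAdd (C.act w))).toAddMonoidHom.toIntLinearMap).comp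
          (((Multiplicative.toAdd (C.act w'))).toAddMonoidHom.toIntLinearMap) := by
  ext x
  simp only [map_mul, AddMonoidHom.coe_toIntLinearMap, LinearMap.comp_apply,
    AddEquiv.coe_toAddMonoidHom]
  rfl

omit HC in
lemma aux_eps_mul (w w' : C.W) : auxEps C (w * w') = auxEps C w * auxEps C w' := by
  unfold auxEps
  rw [aux_lin_mul, LinearMap.det_comp]

omit HC in
lemma aux_eps_one : auxEps C 1 = 1 := by
  unfold auxEps
  have : (((Multiplicative.toAdd (C.act 1))).toAddMonoidHom.toIntLinearMap) = LinearMap.id := by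
    ext x
    simp only [map_one, AddMonoidHom.coe_toIntLinearMap, AddEquiv.coe_toAddMonoidHom,
      LinearMap.id_apply]
    rfl
  rw [this, LinearMap.det_id]

lemma aux_eps_sref {γ : C.X} (hγ : γ ∈ C.Pi) : auxEps C (C.sref γ) = -1 := by
  classical
  set b := Module.Free.chooseBasis ℤ C.X with hb
  set φ := (((Multiplicative.toAdd (C.act (C.sref γ)))).toAddMonoidHom.toIntLinearMap) with hφ
  have hdet : auxEps C (C.sref γ) = (LinearMap.toMatrix b b φ).det := by
    rw [auxEps, ← LinearMap.det_toMatrix b]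
  have hmat : LinearMap.toMatrix b b φ
      = 1 + Matrix.replicateCol Unit (fun i => - (b.repr γ i)) *
          Matrix.replicateRow Unit (fun j => C.pair (b j) γ) := by
    ext i j
    rw [LinearMap.toMatrix_apply]
    have hφj : φ (b j) = b j - C.pair (b j) γ • γ := C.sref_apply γ hγ (b j)
    rw [hφj, map_sub, map_zsmul]
    simp only [Matrix.add_apply, Matrix.mul_apply, Matrix.replicateCol_apply, Matrix.replicateRow_apply,
      Finsupp.coe_sub, Finsupp.coe_smul, Pi.sub_apply, Pi.smul_apply, smul_eq_mul,
      Finset.univ_unique, Finset.sum_singleton]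
    rw [Module.Basis.repr_self_apply, Matrix.one_apply]
    by_cases h : i = j
    · subst h
      simp only [if_pos rfl]
      ring
    · rw [if_neg (fun hh => h hh.symm), if_neg h]
      ring
  rw [hdet, hmat, Matrix.det_one_add_replicateCol_mul_replicateRow]
  have hpair : C.pair γ γ = ∑ i, b.repr γ i * C.pair (b i) γ := by
    let fh : C.X →+ ℤ := AddMonoidHom.mk' (fun x => C.pair x γ) (aux_pair_additive HC hγ)
    have hms := map_sum fh (fun i => b.repr γ i • b i) Finset.univ
    simp only [fh, AddMonoidHom.mk'_apply] at hms
    calc C.pair γ γ = C.pair (∑ i, b.repr γ i • b i) γ :=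
          congrArg (fun t => C.pair t γ) (Module.Basis.sum_repr b γ).symm
    _ = ∑ i, C.pair (b.repr γ i • b i) γ := hms
    _ = ∑ i, b.repr γ i * C.pair (b i) γ :=
          Finset.sum_congr rfl fun i _ => aux_pair_smul HC hγ _ _
  have hsum : dotProduct (fun j => C.pair (b j) γ) (fun i => - (b.repr γ i))
      = - C.pair γ γ := by
    rw [dotProduct, hpair, ← Finset.sum_neg_distrib]
    refine Finset.sum_congr rfl fun i _ => by ring
  rw [hsum, aux_pair_self_eq_two HC hγ]
  norm_num

lemma aux_S_inv {s : C.W} (hs : s ∈ C.S) : s⁻¹ = s := by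
  obtain ⟨γ, hγ, rfl⟩ := C.S_eq ▸ hs
  exact inv_eq_of_mul_eq_one_right (aux_sref_sq HC hγ)

lemma aux_exists_word (w : C.W) : ∃ l : List C.W, (∀ x ∈ l, x ∈ C.S) ∧ l.prod = w := by
  have hw : w ∈ Subgroup.closure C.S := by rw [C.S_gen]; trivial
  induction hw using Subgroup.closure_induction with
  | mem x hx => exact ⟨[x], by simpa using hx, by simp⟩
  | one => exact ⟨[], by simp, by simp⟩
  | mul x y _ _ ihx ihy =>
    obtain ⟨l1, h1, h1'⟩ := ihx
    obtain ⟨l2, h2, h2'⟩ := ihy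
    refine ⟨l1 ++ l2, ?_, by rw [List.prod_append, h1', h2']⟩
    intro a ha
    rcases List.mem_append.mp ha with h | h
    · exact h1 a h
    · exact h2 a h
  | inv x _ ihx =>
    obtain ⟨l, h1, h1'⟩ := ihx
    refine ⟨(l.map fun x => x⁻¹).reverse, ?_, ?_⟩
    · intro a ha
      simp only [List.mem_reverse, List.mem_map] at ha
      obtain ⟨b, hb, rfl⟩ := ha
      rw [aux_S_inv HC (h1 b hb)]
      exact h1 b hb
    · rw [← List.prod_inv_reverse, h1']

omit HC in
lemma aux_len_le (w : C.W) (l : List C.W) (hl : ∀ x ∈ l, x ∈ C.S) (hp : l.prod = w) :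
    C.len w ≤ l.length := by
  rw [C.len_spec]
  exact Nat.sInf_le ⟨l, hl, hp, rfl⟩

lemma aux_exists_min_word (w : C.W) :
    ∃ l : List C.W, (∀ x ∈ l, x ∈ C.S) ∧ l.prod = w ∧ l.length = C.len w := by
  have hne : {n | ∃ l : List C.W, (∀ s ∈ l, s ∈ C.S) ∧ l.prod = w ∧ l.length = n}.Nonempty := by
    obtain ⟨l, h1, h2⟩ := aux_exists_word HC w
    exact ⟨l.length, l, h1, h2, rfl⟩
  have := Nat.sInf_mem hne
  rw [← C.len_spec] at this
  obtain ⟨l, h1, h2, h3⟩ := this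
  exact ⟨l, h1, h2, h3⟩

lemma aux_eps_len (w : C.W) : auxEps C w = (-1) ^ (C.len w) := by
  obtain ⟨l, h1, h2, h3⟩ := aux_exists_min_word HC w
  rw [← h3, ← h2]
  clear h2 h3
  induction l with
  | nil => simpa using aux_eps_one (C := C)
  | cons a l ih =>
    rw [List.prod_cons, aux_eps_mul, List.length_cons]
    have ha : a ∈ C.S := h1 a (by simp)
    obtain ⟨γ, hγ, rfl⟩ := C.S_eq ▸ ha
    rw [aux_eps_sref HC hγ, ih (fun x hx => h1 x (by simp [hx]))]
    ring

omit HC in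
lemma aux_len_one : C.len 1 = 0 := by
  have := aux_len_le (C := C) 1 [] (by simp) (by simp)
  simpa using this

lemma aux_len_eq_zero {w : C.W} (h : C.len w = 0) : w = 1 := by
  obtain ⟨l, h1, h2, h3⟩ := aux_exists_min_word HC w
  rw [h] at h3
  rw [List.length_eq_zero_iff] at h3
  rw [h3] at h2
  simpa using h2.symm

lemma aux_len_mul_le (x y : C.W) : C.len (x * y) ≤ C.len x + C.len y := by
  obtain ⟨l1, h1, h2, h3⟩ := aux_exists_min_word HC x
  obtain ⟨l4, h4, h5, h6⟩ := aux_exists_min_word HC y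
  have := aux_len_le (x * y) (l1 ++ l4)
    (by intro a ha; rcases List.mem_append.mp ha with h | h; exacts [h1 a h, h4 a h])
    (by rw [List.prod_append, h2, h5])
  simpa [h3, h6] using this

lemma aux_len_S {s : C.W} (hs : s ∈ C.S) : C.len s = 1 := by
  have h1 : C.len s ≤ 1 := by simpa using aux_len_le s [s] (by simpa using hs) (by simp)
  have h2 : C.len s ≠ 0 := fun h => aux_mem_S_ne_one HC hs (aux_len_eq_zero HC h)
  omega

lemma aux_len_mul_s_ne {s : C.W} (hs : s ∈ C.S) (w : C.W) : C.len (w * s) ≠ C.len w := by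
  intro h
  obtain ⟨γ, hγ, rfl⟩ := C.S_eq ▸ hs
  have h1 := aux_eps_len HC (w * C.sref γ)
  rw [aux_eps_mul, aux_eps_sref HC hγ, aux_eps_len HC w, h] at h1
  have h2 : ((-1 : ℤ)) ^ (C.len w) ≠ 0 := pow_ne_zero _ (by norm_num)
  have h3 : ((-1 : ℤ)) ^ (C.len w) = 0 := by linarith
  exact h2 h3

lemma aux_len_s_mul_ne {s : C.W} (hs : s ∈ C.S) (w : C.W) : C.len (s * w) ≠ C.len w := by
  intro h
  obtain ⟨γ, hγ, rfl⟩ := C.S_eq ▸ hs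
  have h1 := aux_eps_len HC (C.sref γ * w)
  rw [aux_eps_mul, aux_eps_sref HC hγ, aux_eps_len HC w, h] at h1
  have h2 : ((-1 : ℤ)) ^ (C.len w) ≠ 0 := pow_ne_zero _ (by norm_num)
  have h3 : ((-1 : ℤ)) ^ (C.len w) = 0 := by linarith
  exact h2 h3

lemma aux_S_sq {s : C.W} (hs : s ∈ C.S) : s * s = 1 := by
  obtain ⟨γ, hγ, rfl⟩ := C.S_eq ▸ hs
  exact aux_sref_sq HC hγ

lemma aux_len_mul_s_cases {s : C.W} (hs : s ∈ C.S) (w : C.W) :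
    C.len (w * s) = C.len w + 1 ∨ C.len w = C.len (w * s) + 1 := by
  have h1 : C.len (w * s) ≤ C.len w + 1 := by
    have := aux_len_mul_le HC w s
    rw [aux_len_S HC hs] at this
    omega
  have h2 : C.len w ≤ C.len (w * s) + 1 := by
    have h3 : w = (w * s) * s := by
      rw [mul_assoc, aux_S_sq HC hs, mul_one]
    calc C.len w = C.len ((w * s) * s) := by rw [← h3]
    _ ≤ C.len (w * s) + C.len s := aux_len_mul_le HC _ _
    _ = C.len (w * s) + 1 := by rw [aux_len_S HC hs]
  have h4 := aux_len_mul_s_ne HC hs w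
  omega

lemma aux_len_s_mul_cases {s : C.W} (hs : s ∈ C.S) (w : C.W) :
    C.len (s * w) = C.len w + 1 ∨ C.len w = C.len (s * w) + 1 := by
  have h1 : C.len (s * w) ≤ C.len w + 1 := by
    have := aux_len_mul_le HC s w
    rw [aux_len_S HC hs] at this
    omega
  have h2 : C.len w ≤ C.len (s * w) + 1 := by
    have h3 : w = s * (s * w) := by
      rw [← mul_assoc, aux_S_sq HC hs, one_mul]
    calc C.len w = C.len (s * (s * w)) := by rw [← h3]
    _ ≤ C.len s + C.len (s * w) := aux_len_mul_le HC _ _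
    _ = C.len (s * w) + 1 := by rw [aux_len_S HC hs]; omega
  have h4 := aux_len_s_mul_ne HC hs w
  omega

/-- The coefficient appearing in `Cw`. -/
def auxA (C : WeylCtx) (y : C.W) : A :=
  (-1 : A) ^ C.len y * LaurentPolynomial.T (-(2 * (C.len y : ℤ)))

omit HC in
lemma aux_of_mul (x y : C.W) : C.of (x * y) = C.of x * C.of y := by
  unfold WeylCtx.of
  exact map_mul _ x y

lemma aux_T_mul_W (x y : C.W) (h : C.len (x * y) = C.len x + C.len y) :
    HC.T (C.of x) * HC.T (C.of y) = HC.T (C.of (x * y)) := by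
  rw [aux_of_mul]
  exact HC.T_mul (C.of x) (C.of y) (by
    rw [← aux_of_mul, E.lenE_of, E.lenE_of, E.lenE_of, h])

lemma aux_T_mul_up_right {s : C.W} (hs : s ∈ C.S) {w : C.W}
    (h : C.len (w * s) = C.len w + 1) :
    HC.T (C.of w) * HC.T (C.of s) = HC.T (C.of (w * s)) :=
  aux_T_mul_W HC w s (by rw [aux_len_S HC hs]; exact h)

lemma aux_T_mul_up_left {s : C.W} (hs : s ∈ C.S) {w : C.W}
    (h : C.len (s * w) = C.len w + 1) :
    HC.T (C.of s) * HC.T (C.of w) = HC.T (C.of (s * w)) :=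
  aux_T_mul_W HC s w (by rw [aux_len_S HC hs, h]; omega)

lemma aux_T_mul_down_right {s : C.W} (hs : s ∈ C.S) {w : C.W}
    (h : C.len w = C.len (w * s) + 1) :
    HC.T (C.of w) * HC.T (C.of s)
      = (v ^ 2 : A) • HC.T (C.of (w * s)) + (v ^ 2 - 1 : A) • HC.T (C.of w) := by
  have hws : (w * s) * s = w := by rw [mul_assoc, aux_S_sq HC hs, mul_one]
  have h1 : HC.T (C.of (w * s)) * HC.T (C.of s) = HC.T (C.of w) := by
    have := aux_T_mul_up_right HC hs (w := w * s) (by rw [hws]; exact h)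
    rw [hws] at this
    exact this
  calc HC.T (C.of w) * HC.T (C.of s)
      = HC.T (C.of (w * s)) * HC.T (C.of s) * HC.T (C.of s) := by rw [h1]
    _ = HC.T (C.of (w * s)) * (HC.T (C.of s) * HC.T (C.of s)) := by rw [mul_assoc]
    _ = HC.T (C.of (w * s)) * ((v ^ 2 : A) • (1 : HC.H) + (v ^ 2 - 1 : A) • HC.T (C.of s)) := by
        rw [HC.T_sq s hs]
    _ = (v ^ 2 : A) • HC.T (C.of (w * s))
        + (v ^ 2 - 1 : A) • (HC.T (C.of (w * s)) * HC.T (C.of s)) := by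
        rw [mul_add, mul_smul_comm, mul_smul_comm, mul_one]
    _ = (v ^ 2 : A) • HC.T (C.of (w * s)) + (v ^ 2 - 1 : A) • HC.T (C.of w) := by rw [h1]

lemma aux_T_mul_down_left {s : C.W} (hs : s ∈ C.S) {w : C.W}
    (h : C.len w = C.len (s * w) + 1) :
    HC.T (C.of s) * HC.T (C.of w)
      = (v ^ 2 : A) • HC.T (C.of (s * w)) + (v ^ 2 - 1 : A) • HC.T (C.of w) := by
  have hws : s * (s * w) = w := by rw [← mul_assoc, aux_S_sq HC hs, one_mul]
  have h1 : HC.T (C.of s) * HC.T (C.of (s * w)) = HC.T (C.of w) := by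
    have := aux_T_mul_up_left HC hs (w := s * w) (by rw [hws]; exact h)
    rw [hws] at this
    exact this
  calc HC.T (C.of s) * HC.T (C.of w)
      = HC.T (C.of s) * (HC.T (C.of s) * HC.T (C.of (s * w))) := by rw [h1]
    _ = HC.T (C.of s) * HC.T (C.of s) * HC.T (C.of (s * w)) := by rw [mul_assoc]
    _ = ((v ^ 2 : A) • (1 : HC.H) + (v ^ 2 - 1 : A) • HC.T (C.of s)) * HC.T (C.of (s * w)) := by
        rw [HC.T_sq s hs]
    _ = (v ^ 2 : A) • HC.T (C.of (s * w))
        + (v ^ 2 - 1 : A) • (HC.T (C.of s) * HC.T (C.of (s * w))) := by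
        rw [add_mul, smul_mul_assoc, smul_mul_assoc, one_mul]
    _ = (v ^ 2 : A) • HC.T (C.of (s * w)) + (v ^ 2 - 1 : A) • HC.T (C.of w) := by rw [h1]

omit HC in
lemma aux_auxA_succ {y ys : C.W} (h : C.len ys = C.len y + 1) :
    auxA C ys = -(LaurentPolynomial.T (-2 : ℤ)) * auxA C y := by
  unfold auxA
  rw [h]
  have h1 : (-(2 * ((C.len y + 1 : ℕ) : ℤ))) = (-2) + (-(2 * (C.len y : ℤ))) := by
    push_cast; ring
  rw [h1, LaurentPolynomial.T_add, pow_succ]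
  ring

omit HC in
lemma aux_q_v2 : (LaurentPolynomial.T (-2 : ℤ) : A) * v ^ 2 = 1 := by
  have h1 : (v ^ 2 : A) = LaurentPolynomial.T (2 : ℤ) := by
    rw [LaurentPolynomial.T_pow]; norm_num
  rw [h1, ← LaurentPolynomial.T_add]
  norm_num

/-- Cancellation of an `{y, ys}`-pair in the absorption identity (right version). -/
lemma aux_pair_cancel_right {s : C.W} (hs : s ∈ C.S) {y : C.W}
    (hup : C.len (y * s) = C.len y + 1) :
    auxA C y • (HC.T (C.of y) * HC.T (C.of s) + HC.T (C.of y))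
      + auxA C (y * s) • (HC.T (C.of (y * s)) * HC.T (C.of s) + HC.T (C.of (y * s))) = 0 := by
  have hss : (y * s) * s = y := by rw [mul_assoc, aux_S_sq HC hs, mul_one]
  have e1 : HC.T (C.of y) * HC.T (C.of s) = HC.T (C.of (y * s)) :=
    aux_T_mul_up_right HC hs hup
  have e2 : HC.T (C.of (y * s)) * HC.T (C.of s)
      = (v ^ 2 : A) • HC.T (C.of y) + (v ^ 2 - 1 : A) • HC.T (C.of (y * s)) := by
    have := aux_T_mul_down_right HC hs (w := y * s) (by rw [hss]; exact hup)
    rw [hss] at this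
    exact this
  have e3 : auxA C (y * s) = -(LaurentPolynomial.T (-2 : ℤ)) * auxA C y :=
    aux_auxA_succ hup
  set u := HC.T (C.of y)
  set w := HC.T (C.of (y * s))
  rw [e1, e2, e3]
  have h4 : (-(LaurentPolynomial.T (-2 : ℤ)) * auxA C y) • ((v ^ 2 : A) • u + (v ^ 2 - 1 : A) • w + w)
      = (-(auxA C y)) • (u + w) := by
    have hc : (v ^ 2 : A) • u + (v ^ 2 - 1 : A) • w + w = (v ^ 2 : A) • (u + w) := by
      rw [add_assoc, sub_smul, one_smul, sub_add_cancel, smul_add]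
    have hscal : -(LaurentPolynomial.T (-2 : ℤ) : A) * auxA C y * v ^ 2 = -(auxA C y) := by
      calc -(LaurentPolynomial.T (-2 : ℤ) : A) * auxA C y * v ^ 2
          = -(LaurentPolynomial.T (-2 : ℤ) * v ^ 2) * auxA C y := by ring
        _ = -(auxA C y) := by rw [aux_q_v2]; ring
    rw [hc, smul_smul, hscal]
  rw [h4, neg_smul]
  have : w + u = u + w := add_comm w u
  rw [this, add_neg_cancel]

/-- Cancellation of an `{y, sy}`-pair in the absorption identity (left version). -/
lemma aux_pair_cancel_left {s : C.W} (hs : s ∈ C.S) {y : C.W}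
    (hup : C.len (s * y) = C.len y + 1) :
    auxA C y • (HC.T (C.of s) * HC.T (C.of y) + HC.T (C.of y))
      + auxA C (s * y) • (HC.T (C.of s) * HC.T (C.of (s * y)) + HC.T (C.of (s * y))) = 0 := by
  have hss : s * (s * y) = y := by rw [← mul_assoc, aux_S_sq HC hs, one_mul]
  have e1 : HC.T (C.of s) * HC.T (C.of y) = HC.T (C.of (s * y)) :=
    aux_T_mul_up_left HC hs hup
  have e2 : HC.T (C.of s) * HC.T (C.of (s * y))
      = (v ^ 2 : A) • HC.T (C.of y) + (v ^ 2 - 1 : A) • HC.T (C.of (s * y)) := by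
    have := aux_T_mul_down_left HC hs (w := s * y) (by rw [hss]; exact hup)
    rw [hss] at this
    exact this
  have e3 : auxA C (s * y) = -(LaurentPolynomial.T (-2 : ℤ)) * auxA C y :=
    aux_auxA_succ hup
  set u := HC.T (C.of y)
  set w := HC.T (C.of (s * y))
  rw [e1, e2, e3]
  have h4 : (-(LaurentPolynomial.T (-2 : ℤ)) * auxA C y) • ((v ^ 2 : A) • u + (v ^ 2 - 1 : A) • w + w)
      = (-(auxA C y)) • (u + w) := by
    have hc : (v ^ 2 : A) • u + (v ^ 2 - 1 : A) • w + w = (v ^ 2 : A) • (u + w) := by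
      rw [add_assoc, sub_smul, one_smul, sub_add_cancel, smul_add]
    have hscal : -(LaurentPolynomial.T (-2 : ℤ) : A) * auxA C y * v ^ 2 = -(auxA C y) := by
      calc -(LaurentPolynomial.T (-2 : ℤ) : A) * auxA C y * v ^ 2
          = -(LaurentPolynomial.T (-2 : ℤ) * v ^ 2) * auxA C y := by ring
        _ = -(auxA C y) := by rw [aux_q_v2]; ring
    rw [hc, smul_smul, hscal]
  rw [h4, neg_smul]
  have : w + u = u + w := add_comm w u
  rw [this, add_neg_cancel]

/-- Right absorption: `C_{w_I} T_s = -C_{w_I}` for `s ∈ I`. -/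
lemma aux_Cw_mul_Ts {I : Set C.W} (hI : I ⊆ C.S) (wI : C.W) {s : C.W} (hsI : s ∈ I) :
    HC.Cw I wI * HC.T (C.of s) = - HC.Cw I wI := by
  have hs : s ∈ C.S := hI hsI
  have hsne : s ≠ 1 := aux_mem_S_ne_one HC hs
  set F := Finset.univ.filter (fun y => y ∈ C.WI I) with hF
  have hsum : ∑ y ∈ F, (auxA C y • (HC.T (C.of y) * HC.T (C.of s) + HC.T (C.of y))) = 0 := by
    apply Finset.sum_involution (fun y _ => y * s)
    · intro y hy
      rcases aux_len_mul_s_cases HC hs y with hup | hdn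
      · exact aux_pair_cancel_right HC hs hup
      · have hss : (y * s) * s = y := by rw [mul_assoc, aux_S_sq HC hs, mul_one]
        have hup' : C.len ((y * s) * s) = C.len (y * s) + 1 := by rw [hss]; exact hdn
        have := aux_pair_cancel_right HC hs (y := y * s) hup'
        rw [hss] at this
        rw [add_comm]
        exact this
    · intro y _ _
      intro hys
      exact hsne (mul_left_cancel (show y * s = y * 1 by rw [mul_one]; exact hys))
    · intro y hy
      rw [hF, Finset.mem_filter] at hy ⊢
      exact ⟨Finset.mem_univ _, mul_mem hy.2 (Subgroup.subset_closure hsI)⟩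
    · intro y _
      rw [mul_assoc, aux_S_sq HC hs, mul_one]
  have hCw : HC.Cw I wI
      = ((-v) ^ C.len wI : A) • ∑ y ∈ F, auxA C y • HC.T (C.of y) := rfl
  have hmul : HC.Cw I wI * HC.T (C.of s)
      = ((-v) ^ C.len wI : A) • ∑ y ∈ F, auxA C y • (HC.T (C.of y) * HC.T (C.of s)) := by
    rw [hCw, smul_mul_assoc, Finset.sum_mul]
    congr 1
    exact Finset.sum_congr rfl fun y _ => smul_mul_assoc _ _ _
  have hadd : HC.Cw I wI * HC.T (C.of s) + HC.Cw I wI = 0 := by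
    rw [hmul, hCw, ← smul_add, ← Finset.sum_add_distrib]
    rw [show ∑ y ∈ F, (auxA C y • (HC.T (C.of y) * HC.T (C.of s)) + auxA C y • HC.T (C.of y))
        = ∑ y ∈ F, (auxA C y • (HC.T (C.of y) * HC.T (C.of s) + HC.T (C.of y))) from
      Finset.sum_congr rfl fun y _ => (smul_add _ _ _).symm]
    rw [hsum, smul_zero]
  exact eq_neg_of_add_eq_zero_left hadd

/-- Left absorption: `T_s C_{w_J} = -C_{w_J}` for `s ∈ J`. -/
lemma aux_Ts_mul_Cw {J : Set C.W} (hJ : J ⊆ C.S) (wJ : C.W) {s : C.W} (hsJ : s ∈ J) :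
    HC.T (C.of s) * HC.Cw J wJ = - HC.Cw J wJ := by
  have hs : s ∈ C.S := hJ hsJ
  have hsne : s ≠ 1 := aux_mem_S_ne_one HC hs
  set F := Finset.univ.filter (fun y => y ∈ C.WI J) with hF
  have hsum : ∑ y ∈ F, (auxA C y • (HC.T (C.of s) * HC.T (C.of y) + HC.T (C.of y))) = 0 := by
    apply Finset.sum_involution (fun y _ => s * y)
    · intro y hy
      rcases aux_len_s_mul_cases HC hs y with hup | hdn
      · exact aux_pair_cancel_left HC hs hup
      · have hss : s * (s * y) = y := by rw [← mul_assoc, aux_S_sq HC hs, one_mul]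
        have hup' : C.len (s * (s * y)) = C.len (s * y) + 1 := by rw [hss]; exact hdn
        have := aux_pair_cancel_left HC hs (y := s * y) hup'
        rw [hss] at this
        rw [add_comm]
        exact this
    · intro y _ _
      intro hys
      exact hsne (mul_right_cancel (show s * y = 1 * y by rw [one_mul]; exact hys))
    · intro y hy
      rw [hF, Finset.mem_filter] at hy ⊢
      exact ⟨Finset.mem_univ _, mul_mem (Subgroup.subset_closure hsJ) hy.2⟩
    · intro y _
      rw [← mul_assoc, aux_S_sq HC hs, one_mul]
  have hCw : HC.Cw J wJ
      = ((-v) ^ C.len wJ : A) • ∑ y ∈ F, auxA C y • HC.T (C.of y) := rfl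
  have hmul : HC.T (C.of s) * HC.Cw J wJ
      = ((-v) ^ C.len wJ : A) • ∑ y ∈ F, auxA C y • (HC.T (C.of s) * HC.T (C.of y)) := by
    rw [hCw, mul_smul_comm, Finset.mul_sum]
    congr 1
    exact Finset.sum_congr rfl fun y _ => mul_smul_comm _ _ _
  have hadd : HC.T (C.of s) * HC.Cw J wJ + HC.Cw J wJ = 0 := by
    rw [hmul, hCw, ← smul_add, ← Finset.sum_add_distrib]
    rw [show ∑ y ∈ F, (auxA C y • (HC.T (C.of s) * HC.T (C.of y)) + auxA C y • HC.T (C.of y))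
        = ∑ y ∈ F, (auxA C y • (HC.T (C.of s) * HC.T (C.of y) + HC.T (C.of y))) from
      Finset.sum_congr rfl fun y _ => (smul_add _ _ _).symm]
    rw [hsum, smul_zero]
  exact eq_neg_of_add_eq_zero_left hadd

omit HC in
lemma aux_of_one : C.of (1 : C.W) = 1 := by
  unfold WeylCtx.of
  exact map_one _

lemma aux_theta_eq_bB (μ : C.X) : HC.theta μ = HC.bB (μ, 1) := by
  rw [HC.bB_eq]
  rw [aux_of_one, HC.T_one, mul_one]

lemma aux_theta_li : LinearIndependent A (fun μ : C.X => HC.theta μ) := by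
  have h1 : (fun μ : C.X => HC.theta μ) = (fun p : C.X × C.W => HC.bB p) ∘ (fun μ => (μ, 1)) := by
    funext μ
    exact aux_theta_eq_bB HC μ
  rw [h1]
  exact HC.bB.linearIndependent.comp _ (fun a b hab => (Prod.ext_iff.mp hab).1)

/-- Right multiplication by `1 - θ_{-α}` is injective on the span of the `θ`'s. -/
lemma aux_span_cancel {α : C.X} (hα : α ≠ 0) {u : HC.H}
    (hu : u ∈ Submodule.span A (Set.range HC.theta))
    (h : u * (1 - HC.theta (-α)) = 0) : u = 0 := by
  obtain ⟨c, hc⟩ := Finsupp.mem_span_range_iff_exists_finsupp.mp hu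
  set c' : C.X →₀ A := c.mapDomain (fun μ => μ - α) with hc'
  have hinj : Function.Injective (fun μ : C.X => μ - α) := fun a b hab => by
    have h2 : a - α = b - α := hab
    have h3 : a - α + α = b - α + α := by rw [h2]
    simpa using h3
  have hmul : u * (1 - HC.theta (-α))
      = (c.sum fun i a => a • HC.theta i) - (c'.sum fun i a => a • HC.theta i) := by
    rw [← hc, Finsupp.sum_mul, Finsupp.sum_mapDomain_index
      (by intro i; exact zero_smul A _)
      (by intro i b₁ b₂; exact add_smul b₁ b₂ _), ← Finsupp.sum_sub]
    refine Finsupp.sum_congr fun i _ => ?_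
    rw [smul_mul_assoc, mul_sub, mul_one, HC.theta_mul, ← sub_eq_add_neg, smul_sub]
  have hzero : ((c - c').sum fun i a => a • HC.theta i) = 0 := by
    rw [Finsupp.sum_sub_index (by intro i b₁ b₂; exact sub_smul b₁ b₂ _), ← hmul, h]
  have hcc : c - c' = 0 := by
    have hli := aux_theta_li HC
    exact linearIndependent_iff.mp hli (c - c')
      (by rw [Finsupp.linearCombination_apply]; exact hzero)
  have hrec : ∀ μ : C.X, c (μ - α) = c μ := by
    intro μ
    have h1 : c' (μ - α) = c μ := Finsupp.mapDomain_apply hinj c μ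
    have h2 : c (μ - α) = c' (μ - α) := by
      have h0 : (c - c') (μ - α) = 0 := by rw [hcc]; rfl
      rw [Finsupp.sub_apply] at h0
      exact sub_eq_zero.mp h0
    rw [h2, h1]
  have hc0 : c = 0 := by
    by_contra hne
    obtain ⟨ν, hν⟩ := Finsupp.ne_iff.mp hne
    simp only [Finsupp.coe_zero, Pi.zero_apply] at hν
    have hiter : ∀ k : ℕ, c (ν - k • α) ≠ 0 := by
      intro k
      induction k with
      | zero => simpa using hν
      | succ k ih =>
        have h1 : ν - (k + 1) • α = (ν - k • α) - α := by
          rw [succ_nsmul]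
          abel
        rw [h1, hrec]
        exact ih
    have hginj : Function.Injective (fun k : ℕ => ν - k • α) := by
      intro k l hkl
      simp only at hkl
      have h1 : (k : ℤ) • α = (l : ℤ) • α := by
        rw [natCast_zsmul, natCast_zsmul]
        have : ν - (ν - k • α) = ν - (ν - l • α) := by rw [hkl]
        simpa using this
      exact_mod_cast smul_left_injective ℤ hα h1
    have hsub : Set.range (fun k : ℕ => ν - k • α) ⊆ ↑c.support := by
      rintro x ⟨k, rfl⟩
      exact Finsupp.mem_support_iff.mpr (hiter k)
    exact (Set.infinite_range_of_injective hginj) (Set.Finite.subset (c.support.finite_toSet) hsub)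
  rw [← hc, hc0, Finsupp.sum_zero_index]

/-- The crucial identity `g_λ - g_{λ-α} = (v²-1)(θ_λ + θ_{sλ+α})` in `H`. -/
lemma aux_g_diff {α : C.X} (hαPi : α ∈ C.Pi) (lam : C.X) :
    (HC.theta lam * HC.T (C.of (C.sref α))
        - HC.T (C.of (C.sref α)) * HC.theta ((Multiplicative.toAdd (C.act (C.sref α))) lam))
      - (HC.theta (lam - α) * HC.T (C.of (C.sref α))
        - HC.T (C.of (C.sref α)) * HC.theta ((Multiplicative.toAdd (C.act (C.sref α))) (lam - α)))
      = (v ^ 2 - 1 : A) • (HC.theta lam + HC.theta ((Multiplicative.toAdd (C.act (C.sref α))) lam + α)) := by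
  have hα0 : α ≠ 0 := aux_root_ne_zero HC hαPi
  have hsla : (Multiplicative.toAdd (C.act (C.sref α))) (lam - α) = (Multiplicative.toAdd (C.act (C.sref α))) lam + α := by
    rw [map_sub, aux_act_sref_self HC hαPi, sub_neg_eq_add]
  set s := C.sref α
  set g1 := HC.theta lam * HC.T (C.of s) - HC.T (C.of s) * HC.theta ((Multiplicative.toAdd (C.act s)) lam) with hg1
  set g2 := HC.theta (lam - α) * HC.T (C.of s)
      - HC.T (C.of s) * HC.theta ((Multiplicative.toAdd (C.act s)) (lam - α)) with hg2
  set r := (v ^ 2 - 1 : A) • (HC.theta lam + HC.theta ((Multiplicative.toAdd (C.act s)) lam + α)) with hr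
  have hspan : g1 - g2 - r ∈ Submodule.span A (Set.range HC.theta) := by
    refine sub_mem (sub_mem ?_ ?_) ?_
    · exact HC.bernstein_mem α hαPi lam
    · exact HC.bernstein_mem α hαPi (lam - α)
    · exact Submodule.smul_mem _ _ (add_mem
        (Submodule.subset_span ⟨lam, rfl⟩)
        (Submodule.subset_span ⟨(Multiplicative.toAdd (C.act s)) lam + α, rfl⟩))
  have hprod : (g1 - g2 - r) * (1 - HC.theta (-α)) = 0 := by
    have b1 := HC.bernstein α hαPi lam
    have b2 := HC.bernstein α hαPi (lam - α)
    have hr1 : r * (1 - HC.theta (-α))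
        = (v ^ 2 - 1 : A) • (HC.theta lam + HC.theta ((Multiplicative.toAdd (C.act s)) lam + α)
            - HC.theta (lam - α) - HC.theta ((Multiplicative.toAdd (C.act s)) lam)) := by
      rw [hr, smul_mul_assoc]
      congr 1
      rw [mul_sub, mul_one, add_mul, HC.theta_mul, HC.theta_mul]
      have e1 : lam + -α = lam - α := by abel
      have e2 : (Multiplicative.toAdd (C.act s)) lam + α + -α = (Multiplicative.toAdd (C.act s)) lam := by abel
      rw [e1, e2]
      abel
    rw [sub_mul, sub_mul, b1, b2, hsla, hr1]
    rw [← smul_sub, ← smul_sub]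
    rw [show HC.theta lam - HC.theta ((Multiplicative.toAdd (C.act s)) lam)
          - (HC.theta (lam - α) - HC.theta ((Multiplicative.toAdd (C.act s)) lam + α))
          - (HC.theta lam + HC.theta ((Multiplicative.toAdd (C.act s)) lam + α)
            - HC.theta (lam - α) - HC.theta ((Multiplicative.toAdd (C.act s)) lam)) = 0 from by abel]
    rw [smul_zero]
  have := aux_span_cancel HC hα0 hspan hprod
  exact sub_eq_zero.mp this

/-- The commutation `s z = z s_β` where `β = z⁻¹(α)`. -/
lemma aux_sz_eq_zsb {z : C.W} {α : C.X} (hαPi : α ∈ C.Pi)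
    (hβPi : (Multiplicative.toAdd (C.act z⁻¹)) α ∈ C.Pi) :
    C.sref α * z = z * C.sref ((Multiplicative.toAdd (C.act z⁻¹)) α) := by
  set β := (Multiplicative.toAdd (C.act z⁻¹)) α with hβ
  have hα0 : α ≠ 0 := aux_root_ne_zero HC hαPi
  have hzβ : (Multiplicative.toAdd (C.act z)) β = α := by
    rw [hβ]
    have h1 : (Multiplicative.toAdd (C.act z)) ((Multiplicative.toAdd (C.act z⁻¹)) α) = (Multiplicative.toAdd (C.act z * C.act z⁻¹)) α := rfl
    rw [h1, ← map_mul, mul_inv_cancel, map_one]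
    rfl
  set w := C.sref α * (z * C.sref β * z⁻¹) with hw
  have hw1 : w = 1 := by
    apply aux_transvection_eq_one C hα0
      (f := fun lam => C.pair lam α - C.pair ((Multiplicative.toAdd (C.act z⁻¹)) lam) β)
    · intro lam
      have h1 : (Multiplicative.toAdd (C.act w)) lam
          = (Multiplicative.toAdd (C.act (C.sref α))) ((Multiplicative.toAdd (C.act z)) ((Multiplicative.toAdd (C.act (C.sref β))) ((Multiplicative.toAdd (C.act z⁻¹)) lam))) := by
        rw [hw, (C.act).map_mul, (C.act).map_mul, (C.act).map_mul]
        rfl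
      set μ := (Multiplicative.toAdd (C.act z⁻¹)) lam with hμ
      have h2 : (Multiplicative.toAdd (C.act (C.sref β))) μ = μ - C.pair μ β • β := C.sref_apply β hβPi μ
      have h3 : (Multiplicative.toAdd (C.act z)) (μ - C.pair μ β • β) = lam - C.pair μ β • α := by
        rw [map_sub, map_zsmul, hzβ, hμ]
        congr 1
        have h4 : (Multiplicative.toAdd (C.act z)) ((Multiplicative.toAdd (C.act z⁻¹)) lam) = (Multiplicative.toAdd (C.act z * C.act z⁻¹)) lam := rfl
        rw [h4, ← map_mul, mul_inv_cancel, map_one]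
        rfl
      rw [h1, h2, h3, C.sref_apply α hαPi _]
      rw [aux_pair_sub HC hαPi, aux_pair_smul HC hαPi, aux_pair_self_eq_two HC hαPi]
      rw [sub_sub, ← add_smul]
      congr 1
      ring
    · have h5 : (Multiplicative.toAdd (C.act z⁻¹)) α = β := rfl
      rw [h5, aux_pair_self_eq_two HC hαPi, aux_pair_self_eq_two HC hβPi]
      norm_num
  have h6 : C.sref α = (z * C.sref β * z⁻¹)⁻¹ := eq_inv_of_mul_eq_one_left hw1
  rw [h6]
  rw [mul_inv_rev, mul_inv_rev, inv_inv, aux_S_inv HC (aux_sref_mem_S hβPi)]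
  group

lemma aux_len_s_mul_z {I J : Set C.W} {z : C.W} (hz : z ∈ C.WIJ I J) {s : C.W}
    (hsS : s ∈ C.S) (hsI : s ∈ I) : C.len (s * z) = C.len z + 1 := by
  have h1 : C.len z ≤ C.len (s * z) := by
    apply hz
    exact ⟨s, Subgroup.subset_closure hsI, 1, one_mem _, by rw [mul_one]⟩
  rcases aux_len_s_mul_cases HC hsS z with h | h
  · exact h
  · omega

end Aux

/-- Suppose `z ∈ W^{IJ}`, `α ∈ Π_I` with `z⁻¹(α) ∈ Π_J`, and `s = s_α`.
Then for every `λ ∈ X`: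
`C_{w_I} θ_{s(λ)} T_z C_{w_J} = C_{w_I} (v² θ_λ − θ_{λ−α} + v² θ_{s(λ)+α}) T_z C_{w_J}`. -/
theorem Cw_theta_recursion (C : WeylCtx) (E : ExtCtx C) (HC : HeckeCtx C E)
    (I J : Set C.W) (hI : I ⊆ C.S) (hJ : J ⊆ C.S)
    (wI wJ : C.W) (hwI : C.IsLongest I wI) (hwJ : C.IsLongest J wJ)
    (z : C.W) (hz : z ∈ C.WIJ I J)
    (α : C.X) (hα : α ∈ C.PiI I) (hzα : Multiplicative.toAdd (C.act z⁻¹) α ∈ C.PiI J) (lam : C.X) :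
    HC.Cw I wI * HC.theta (Multiplicative.toAdd (C.act (C.sref α)) lam) * HC.T (C.of z) * HC.Cw J wJ =
      HC.Cw I wI *
        ((v ^ 2 : A) • HC.theta lam - HC.theta (lam - α) +
          (v ^ 2 : A) • HC.theta (Multiplicative.toAdd (C.act (C.sref α)) lam + α)) *
        HC.T (C.of z) * HC.Cw J wJ := by
  classical
  have hαPi : α ∈ C.Pi := hα.1
  have hβPi : (Multiplicative.toAdd (C.act z⁻¹)) α ∈ C.Pi := hzα.1
  set s := C.sref α with hs
  set β := (Multiplicative.toAdd (C.act z⁻¹)) α with hβ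
  have hsS : s ∈ C.S := aux_sref_mem_S hαPi
  have hsβS : C.sref β ∈ C.S := aux_sref_mem_S hβPi
  have hcomm : s * z = z * C.sref β := aux_sz_eq_zsb HC hαPi hβPi
  have hlen : C.len (s * z) = C.len z + 1 := aux_len_s_mul_z HC hz hsS hα.2
  set CI := HC.Cw I wI with hCI
  set CJ := HC.Cw J wJ with hCJ
  set Tz := HC.T (C.of z) with hTz
  set Ts := HC.T (C.of s) with hTs
  set M := Tz * CJ with hM
  have hF1 : CI * Ts = -CI := aux_Cw_mul_Ts HC hI wI hα.2
  have hTsz : Ts * Tz = HC.T (C.of (s * z)) := aux_T_mul_up_left HC hsS hlen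
  have hTzsβ : Tz * HC.T (C.of (C.sref β)) = HC.T (C.of (s * z)) := by
    have hlen2 : C.len (z * C.sref β) = C.len z + 1 := by rw [← hcomm]; exact hlen
    have h1 := aux_T_mul_up_right HC hsβS hlen2
    rw [← hcomm] at h1
    exact h1
  have hF2 : Ts * M = -M := by
    rw [hM, ← mul_assoc, hTsz, ← hTzsβ, mul_assoc,
      aux_Ts_mul_Cw HC hJ wJ hzα.2, mul_neg]
  -- the linear functional `P μ = C_I θ_μ T_z C_J`
  set P : C.X → HC.H := fun μ => CI * (HC.theta μ * M) with hP
  -- the master identity (Statement `D`)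
  have hD : ∀ μ : C.X,
      CI * ((HC.theta μ * Ts - Ts * HC.theta ((Multiplicative.toAdd (C.act s)) μ)) * M)
        = P ((Multiplicative.toAdd (C.act s)) μ) - P μ := by
    intro μ
    have t1 : CI * ((HC.theta μ * Ts) * M) = -(P μ) := by
      rw [mul_assoc (HC.theta μ) Ts M, hF2, hP]
      simp only [mul_neg]
    have t2 : CI * ((Ts * HC.theta ((Multiplicative.toAdd (C.act s)) μ)) * M) = -(P ((Multiplicative.toAdd (C.act s)) μ)) := by
      rw [mul_assoc Ts _ M, ← mul_assoc CI Ts _, hF1, hP]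
      simp only [neg_mul]
    rw [sub_mul, mul_sub, t1, t2]
    abel
  -- apply `D` at `lam` and at `lam - α`
  have hsla : (Multiplicative.toAdd (C.act s)) (lam - α) = (Multiplicative.toAdd (C.act s)) lam + α := by
    rw [map_sub, aux_act_sref_self HC hαPi, sub_neg_eq_add]
  have hD1 : CI * ((HC.theta lam * Ts - Ts * HC.theta ((Multiplicative.toAdd (C.act s)) lam)) * M)
      = P ((Multiplicative.toAdd (C.act s)) lam) - P lam := hD lam
  have hD2 : CI * ((HC.theta (lam - α) * Ts - Ts * HC.theta ((Multiplicative.toAdd (C.act s)) (lam - α))) * M)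
      = P ((Multiplicative.toAdd (C.act s)) lam + α) - P (lam - α) := by
    rw [hD (lam - α), hsla]
  -- the `g`-difference identity
  have hg := aux_g_diff HC hαPi lam
  rw [← hs, ← hTs] at hg
  -- combine
  have hcomb : P ((Multiplicative.toAdd (C.act s)) lam) - P lam - (P ((Multiplicative.toAdd (C.act s)) lam + α) - P (lam - α))
      = (v ^ 2 - 1 : A) • P lam + (v ^ 2 - 1 : A) • P ((Multiplicative.toAdd (C.act s)) lam + α) := by
    rw [← hD1, ← hD2, ← mul_sub, ← sub_mul, hg]
    simp only [smul_mul_assoc, mul_smul_comm, add_mul, mul_add, smul_add, hP]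
  have hkey : P ((Multiplicative.toAdd (C.act s)) lam)
      = (v ^ 2 : A) • P lam - P (lam - α) + (v ^ 2 : A) • P ((Multiplicative.toAdd (C.act s)) lam + α) := by
    have hv : ∀ x : HC.H, (v ^ 2 : A) • x = x + (v ^ 2 - 1 : A) • x := fun x => by
      rw [sub_smul, one_smul]
      abel
    rw [hv (P lam), hv (P ((Multiplicative.toAdd (C.act s)) lam + α))]
    calc P ((Multiplicative.toAdd (C.act s)) lam)
        = (P ((Multiplicative.toAdd (C.act s)) lam) - P lam - (P ((Multiplicative.toAdd (C.act s)) lam + α) - P (lam - α)))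
          + P lam + P ((Multiplicative.toAdd (C.act s)) lam + α) - P (lam - α) := by abel
      _ = ((v ^ 2 - 1 : A) • P lam + (v ^ 2 - 1 : A) • P ((Multiplicative.toAdd (C.act s)) lam + α))
          + P lam + P ((Multiplicative.toAdd (C.act s)) lam + α) - P (lam - α) := by rw [hcomb]
      _ = P lam + (v ^ 2 - 1 : A) • P lam - P (lam - α)
          + (P ((Multiplicative.toAdd (C.act s)) lam + α) + (v ^ 2 - 1 : A) • P ((Multiplicative.toAdd (C.act s)) lam + α)) := by abel
  -- rewrite the goal in terms of `P`
  have hL : CI * HC.theta ((Multiplicative.toAdd (C.act s)) lam) * Tz * CJ = P ((Multiplicative.toAdd (C.act s)) lam) := by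
    rw [hP]
    simp only [mul_assoc, hM]
  have hR : CI * ((v ^ 2 : A) • HC.theta lam - HC.theta (lam - α)
        + (v ^ 2 : A) • HC.theta ((Multiplicative.toAdd (C.act s)) lam + α)) * Tz * CJ
      = (v ^ 2 : A) • P lam - P (lam - α) + (v ^ 2 : A) • P ((Multiplicative.toAdd (C.act s)) lam + α) := by
    rw [hP]
    simp only [mul_add, mul_sub, add_mul, sub_mul, smul_mul_assoc, mul_smul_comm,
      mul_assoc, hM]
  rw [hL, hR, hkey]
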